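/- arXiv:1809.00022 — 7 statements merged into one kernel-verified Lean document; each statement's English description precedes it below -/
import Mathlib

section
/- Let X be a metric space with e : K(X) → C_b(X) given by e(A)(x) = d(x,A). Let A_1 ⊊ ⋯ ⊊ A_n and B_1 ⊊ ⋯ ⊊ B_m be strictly increasing chains of nonempty compact subsets of X, with A_n ≠ X if n > 0 and B_m ≠ X if m > 0. If Σ λ_i e(A_i) = Σ μ_j e(B_j) with all λ_i > 0 and μ_j > 0, then m = n, A_i = B_i for all i, and λ_i = μ_i for all i. -/
open Metric TopologicalSpace

private lemma sum_pos_aux {X : Type*} [MetricSpace X] {m : ℕ}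
    (B : Fin (m + 1) → NonemptyCompacts X) (hB : Monotone B)
    (mu : Fin (m + 1) → ℝ) (hmu : ∀ j, 0 < mu j)
    {x : X} (hx : x ∉ (B (Fin.last m) : Set X)) :
    0 < ∑ j, mu j * infDist x (B j : Set X) := by
  have hpos : 0 < infDist x (B (Fin.last m) : Set X) :=
    ((B (Fin.last m)).isCompact.isClosed.notMem_iff_infDist_pos
      (B (Fin.last m)).nonempty).1 hx
  exact Finset.sum_pos' (fun j _ => mul_nonneg (hmu j).le infDist_nonneg)
    ⟨Fin.last m, Finset.mem_univ _, mul_pos (hmu _) hpos⟩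

private lemma mem_of_sum_eq_zero {X : Type*} [MetricSpace X] {m : ℕ}
    (B : Fin (m + 1) → NonemptyCompacts X) (mu : Fin (m + 1) → ℝ)
    (hmu : ∀ j, 0 < mu j) {x : X}
    (h : ∑ j, mu j * infDist x (B j : Set X) = 0) : x ∈ (B 0 : Set X) := by
  have h0 : mu 0 * infDist x (B 0 : Set X) = 0 :=
    (Finset.sum_eq_zero_iff_of_nonneg
      (fun j _ => mul_nonneg (hmu j).le infDist_nonneg)).1 h 0 (Finset.mem_univ _)
  have hd := (mul_eq_zero.1 h0).resolve_left (hmu 0).ne'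
  exact ((B 0).isCompact.isClosed.mem_iff_infDist_zero (B 0).nonempty).2 hd

private lemma not_lt_aux {X : Type*} [MetricSpace X] {n m : ℕ}
    (A : Fin (n + 1) → NonemptyCompacts X) (B : Fin (m + 1) → NonemptyCompacts X)
    (hA : StrictMono A)
    (hAX : (A 0 : Set X) ≠ Set.univ)
    (hAB : (A 0 : Set X) = (B 0 : Set X))
    (lam : Fin (n + 1) → ℝ) (mu : Fin (m + 1) → ℝ)
    (hlam : ∀ i, 0 < lam i) (hmu : ∀ j, 0 < mu j)
    (heq : ∀ x : X, ∑ i, lam i * infDist x (A i : Set X)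
        = ∑ j, mu j * infDist x (B j : Set X)) :
    ¬ lam 0 < mu 0 := by
  intro hlt
  have key : ∀ x : X, (mu 0 - lam 0) * infDist x (B 0 : Set X) +
      ∑ j : Fin m, mu j.succ * infDist x (B j.succ : Set X)
      = ∑ i : Fin n, lam i.succ * infDist x (A i.succ : Set X) := by
    intro x
    have h := heq x
    rw [Fin.sum_univ_succ, Fin.sum_univ_succ, hAB] at h
    linear_combination -h
  have hsubpos : 0 < mu 0 - lam 0 := by linarith
  cases n with
  | zero =>
    -- LHS sums over Fin 0 are empty, so infDist x (B 0) = 0 for all x, i.e. B 0 = univ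
    apply hAX
    rw [hAB, Set.eq_univ_iff_forall]
    intro x
    have h := key x
    simp only [Finset.univ_eq_empty, Finset.sum_empty] at h
    have hnn : 0 ≤ ∑ j : Fin m, mu j.succ * infDist x (B j.succ : Set X) :=
      Finset.sum_nonneg fun j _ => mul_nonneg (hmu _).le infDist_nonneg
    have hd : infDist x (B 0 : Set X) = 0 := by
      nlinarith [infDist_nonneg (s := (B 0 : Set X)) (x := x)]
    exact ((B 0).isCompact.isClosed.mem_iff_infDist_zero (B 0).nonempty).2 hd
  | succ n' =>
    -- pick x ∈ A 1 \ A 0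
    have hlt01 : (A 0 : Set X) ⊂ (A 1 : Set X) := hA (by
      rw [Fin.lt_def]; simp)
    obtain ⟨x, hx1, hx0⟩ := Set.exists_of_ssubset hlt01
    have hRHS : ∑ i : Fin (n' + 1), lam i.succ * infDist x (A i.succ : Set X) = 0 := by
      refine Finset.sum_eq_zero fun i _ => ?_
      have h1le : (1 : Fin (n' + 2)) ≤ i.succ := by
        rw [Fin.le_def]; simp
      have : x ∈ (A i.succ : Set X) := hA.monotone h1le hx1
      rw [infDist_zero_of_mem this, mul_zero]
    have hd0 : 0 < infDist x (B 0 : Set X) := by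
      refine ((B 0).isCompact.isClosed.notMem_iff_infDist_pos (B 0).nonempty).1 ?_
      rw [← hAB]; exact hx0
    have hnn : 0 ≤ ∑ j : Fin m, mu j.succ * infDist x (B j.succ : Set X) :=
      Finset.sum_nonneg fun j _ => mul_nonneg (hmu _).le infDist_nonneg
    have h := key x
    rw [hRHS] at h
    nlinarith

private lemma main_aux {X : Type*} [MetricSpace X] :
    ∀ (n m : ℕ) (A : Fin n → NonemptyCompacts X) (B : Fin m → NonemptyCompacts X),
    StrictMono A → StrictMono B →
    (∀ i, (A i : Set X) ≠ Set.univ) → (∀ j, (B j : Set X) ≠ Set.univ) →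
    ∀ (lam : Fin n → ℝ) (mu : Fin m → ℝ), (∀ i, 0 < lam i) → (∀ j, 0 < mu j) →
    (∀ x : X, ∑ i, lam i * infDist x (A i : Set X)
        = ∑ j, mu j * infDist x (B j : Set X)) →
    n = m ∧ ∀ (i : Fin n) (j : Fin m), (i : ℕ) = (j : ℕ) → A i = B j ∧ lam i = mu j := by
  intro n
  induction n with
  | zero =>
    intro m A B hA hB hAX hBX lam mu hlam hmu heq
    cases m with
    | zero => exact ⟨rfl, fun i => i.elim0⟩
    | succ m' =>
      exfalso
      obtain ⟨x, hx⟩ := (Set.ne_univ_iff_exists_notMem _).1 (hBX (Fin.last m'))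
      have hpos := sum_pos_aux B hB.monotone mu hmu hx
      have h := heq x
      simp only [Finset.univ_eq_empty, Finset.sum_empty] at h
      linarith
  | succ n' ih =>
    intro m A B hA hB hAX hBX lam mu hlam hmu heq
    cases m with
    | zero =>
      exfalso
      obtain ⟨x, hx⟩ := (Set.ne_univ_iff_exists_notMem _).1 (hAX (Fin.last n'))
      have hpos := sum_pos_aux A hA.monotone lam hlam hx
      have h := heq x
      simp only [Finset.univ_eq_empty, Finset.sum_empty] at h
      linarith
    | succ m' =>
      have hAB0 : (A 0 : Set X) = (B 0 : Set X) := by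
        apply Set.Subset.antisymm
        · intro x hx
          have hzero : ∑ i, lam i * infDist x (A i : Set X) = 0 :=
            Finset.sum_eq_zero fun i _ => by
              rw [infDist_zero_of_mem (hA.monotone (Fin.zero_le i) hx), mul_zero]
          exact mem_of_sum_eq_zero B mu hmu (by rw [← heq x, hzero])
        · intro x hx
          have hzero : ∑ j, mu j * infDist x (B j : Set X) = 0 :=
            Finset.sum_eq_zero fun j _ => by
              rw [infDist_zero_of_mem (hB.monotone (Fin.zero_le j) hx), mul_zero]
          exact mem_of_sum_eq_zero A lam hlam (by rw [heq x, hzero])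
      have hl0 : lam 0 = mu 0 :=
        le_antisymm
          (not_lt.1 (not_lt_aux B A hB (hBX 0) hAB0.symm mu lam hmu hlam
            (fun x => (heq x).symm)))
          (not_lt.1 (not_lt_aux A B hA (hAX 0) hAB0 lam mu hlam hmu heq))
      have heq' : ∀ x : X, ∑ i : Fin n', lam i.succ * infDist x (A i.succ : Set X)
          = ∑ j : Fin m', mu j.succ * infDist x (B j.succ : Set X) := by
        intro x
        have h := heq x
        rw [Fin.sum_univ_succ, Fin.sum_univ_succ, hAB0, hl0] at h
        exact add_left_cancel h
      obtain ⟨hnm, hfacts⟩ := ih m' (A ∘ Fin.succ) (B ∘ Fin.succ)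
        (hA.comp Fin.strictMono_succ) (hB.comp Fin.strictMono_succ)
        (fun i => hAX i.succ) (fun j => hBX j.succ)
        (lam ∘ Fin.succ) (mu ∘ Fin.succ)
        (fun i => hlam i.succ) (fun j => hmu j.succ) heq'
      refine ⟨by omega, ?_⟩
      intro i j hij
      rcases Fin.eq_zero_or_eq_succ i with rfl | ⟨i', rfl⟩
      · rcases Fin.eq_zero_or_eq_succ j with rfl | ⟨j', rfl⟩
        · exact ⟨NonemptyCompacts.ext hAB0, hl0⟩
        · simp [Fin.val_succ] at hij
      · rcases Fin.eq_zero_or_eq_succ j with rfl | ⟨j', rfl⟩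
        · simp [Fin.val_succ] at hij
        · exact hfacts i' j' (by simpa using hij)

/-- Let `A_1 ⊊ ⋯ ⊊ A_n` and `B_1 ⊊ ⋯ ⊊ B_m` be strictly increasing chains of nonempty
compact subsets of a metric space `X`, none equal to all of `X`.  If
`Σ λ_i e(A_i) = Σ μ_j e(B_j)` (where `e(A)(x) = d(x,A)`) with all `λ_i, μ_j > 0`,
then `m = n`, `A_i = B_i` and `λ_i = μ_i` for all `i`. -/
theorem stmt5 {X : Type*} [MetricSpace X] {n m : ℕ}
    (A : Fin n → NonemptyCompacts X) (B : Fin m → NonemptyCompacts X)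
    (hA : StrictMono A) (hB : StrictMono B)
    (hAX : ∀ i, (A i : Set X) ≠ Set.univ) (hBX : ∀ j, (B j : Set X) ≠ Set.univ)
    (lam : Fin n → ℝ) (mu : Fin m → ℝ)
    (hlam : ∀ i, 0 < lam i) (hmu : ∀ j, 0 < mu j)
    (heq : ∀ x : X, ∑ i, lam i * infDist x (A i : Set X)
        = ∑ j, mu j * infDist x (B j : Set X)) :
    n = m ∧ ∀ (i : Fin n) (j : Fin m), (i : ℕ) = (j : ℕ) → A i = B j ∧ lam i = mu j :=
  main_aux n m A B hA hB hAX hBX lam mu hlam hmu heq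
end

section
/- Let X be a metric space and let A : [n] → K(X) and B : [m] → K(X) be injective monotone chains of nonempty compact subsets of X. Then the convex hulls |A| and |B| of {e(A_1),…,e(A_n)} and {e(B_1),…,e(B_m)} in C_b(X) satisfy |A| ∩ |B| = |C|, where C is the injective monotone chain enumerating A([n]) ∩ B([m]). -/
/-!
Write a point of a convex hull of distance functions `e(C) = d(·, C)` as a finitely supported
nonnegative weighting `w` of the sets. When the support of `w` is a chain, the zero set of
`∑ w C • e(C)` is the least set of that chain, so the least set is determined by the function.
Subtracting the smaller of the two weights at this common least set removes it from one of the
two weightings without changing the function or the total weight. By induction on the sizes of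
the supports, a weighting supported on a chain is therefore determined by its function and
total weight. A point of `|A| ∩ |B|` thus has a single weighting, supported in `A([n]) ∩ B([m])`.
-/

open Metric TopologicalSpace Finset

theorem Finset.exists_isLeast_of_isChain {α : Type*} [PartialOrder α] {s : Finset α}
    (hc : IsChain (· ≤ ·) (s : Set α)) (hs : s.Nonempty) : ∃ a, IsLeast (s : Set α) a := by
  obtain ⟨a, ha⟩ := s.exists_minimal hs
  exact ⟨a, ha.prop, fun b hb => (hc.total ha.prop hb).elim id (ha.le_of_le hb)⟩

theorem mem_convexHull_image_iff_exists_finsupp {R ι E : Type*} [Field R] [LinearOrder R]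
    [IsStrictOrderedRing R] [AddCommGroup E] [Module R E] {f : ι → E} {S : Set ι} {x : E} :
    x ∈ convexHull R (f '' S) ↔ ∃ w : ι →₀ R, 0 ≤ w ∧ ↑w.support ⊆ S ∧
      (w.sum fun _ a => a) = 1 ∧ Finsupp.linearCombination R f w = x := by
  classical
  constructor
  · intro hx
    obtain ⟨κ, _, c, z, hc₀, hc₁, hz, rfl⟩ := mem_convexHull_iff_exists_fintype.mp hx
    choose i hiS hfi using hz
    refine ⟨∑ k, Finsupp.single (i k) (c k), ?_, ?_, ?_, ?_⟩
    · exact sum_nonneg fun k _ => Finsupp.single_nonneg.mpr (hc₀ k)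
    · intro j hj
      obtain ⟨k, -, hk⟩ := mem_biUnion.mp (Finsupp.support_finsetSum hj)
      rw [mem_singleton.mp (Finsupp.support_single_subset hk)]
      exact hiS k
    · rw [← Finsupp.sum_finsetSum_index (fun _ => rfl) (fun _ _ _ => rfl)]
      simpa only [Finsupp.sum_single_index] using hc₁
    · simp [hfi]
  · rintro ⟨w, hw₀, hwS, hw₁, rfl⟩
    rw [Finsupp.linearCombination_apply, Finsupp.sum, ← centerMass_eq_of_sum_1 _ _ hw₁]
    exact w.support.centerMass_mem_convexHull (fun i _ => hw₀ i) (one_pos.trans_eq hw₁.symm)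
      fun i hi => Set.mem_image_of_mem f (hwS hi)

namespace Finsupp

variable {α G : Type*}

theorem sum_id_eq_zero_iff [AddCommMonoid G] [PartialOrder G] [IsOrderedCancelAddMonoid G]
    {w : α →₀ G} (hw : 0 ≤ w) : (w.sum fun _ a => a) = 0 ↔ w = 0 := by
  refine ⟨fun h => ?_, fun h => by rw [h, sum_zero_index]⟩
  ext i
  by_contra hi
  exact (sum_pos' (fun j _ => hw j) ⟨i, mem_support_iff.mpr hi, (hw i).lt_of_ne' hi⟩).ne' h

variable [AddGroup G]

theorem support_sub_single_subset [DecidableEq α] {w : α →₀ G} {i : α} (hi : i ∈ w.support)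
    (a : G) : (w - single i a).support ⊆ w.support :=
  support_sub.trans <| union_subset le_rfl <|
    support_single_subset.trans (singleton_subset_iff.mpr hi)

theorem card_support_sub_single_self_lt [DecidableEq α] {w : α →₀ G} {i : α}
    (hi : i ∈ w.support) : #(w - single i (w i)).support < #w.support := by
  rw [← erase_eq_sub_single, support_erase]
  exact card_erase_lt_of_mem hi

theorem sub_single_nonneg [PartialOrder G] [AddRightMono G] {w : α →₀ G} (hw : 0 ≤ w) {i : α}
    {a : G} (ha : a ≤ w i) : 0 ≤ w - single i a := by
  intro j
  rcases eq_or_ne i j with rfl | hij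
  · simpa using sub_nonneg.mpr ha
  · simpa [single_apply, hij] using hw j

end Finsupp

section WeightedInfDist

variable {X : Type*} [MetricSpace X]

noncomputable def weightedInfDist (w : NonemptyCompacts X →₀ ℝ) (x : X) : ℝ :=
  w.sum fun C a => a * infDist x C

theorem weightedInfDist_sub (w v : NonemptyCompacts X →₀ ℝ) :
    weightedInfDist (w - v) = weightedInfDist w - weightedInfDist v :=
  funext fun _ => Finsupp.sum_sub_index fun _ _ _ => sub_mul _ _ _

theorem weightedInfDist_eq_zero_iff {w : NonemptyCompacts X →₀ ℝ} (hw : 0 ≤ w) {x : X} :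
    weightedInfDist w x = 0 ↔ ∀ C ∈ w.support, x ∈ (C : Set X) := by
  rw [weightedInfDist, Finsupp.sum,
    sum_eq_zero_iff_of_nonneg fun C _ => mul_nonneg (hw C) infDist_nonneg]
  refine forall₂_congr fun C hC => ?_
  rw [mul_eq_zero, or_iff_right (Finsupp.mem_support_iff.mp hC),
    C.isCompact.isClosed.mem_iff_infDist_zero C.nonempty]

theorem weightedInfDist_eq_zero_iff_of_isLeast {w : NonemptyCompacts X →₀ ℝ} (hw : 0 ≤ w)
    {C : NonemptyCompacts X} (hC : IsLeast (w.support : Set (NonemptyCompacts X)) C) {x : X} :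
    weightedInfDist w x = 0 ↔ x ∈ (C : Set X) := by
  rw [weightedInfDist_eq_zero_iff hw]
  exact ⟨fun h => h C hC.1, fun hx D hD => hC.2 hD hx⟩

theorem eq_of_weightedInfDist_eq {w v : NonemptyCompacts X →₀ ℝ} (hw : 0 ≤ w) (hv : 0 ≤ v)
    (hwc : IsChain (· ≤ ·) (w.support : Set (NonemptyCompacts X)))
    (hvc : IsChain (· ≤ ·) (v.support : Set (NonemptyCompacts X)))
    (hsum : (w.sum fun _ a => a) = v.sum fun _ a => a)
    (hdist : weightedInfDist w = weightedInfDist v) : w = v := by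
  classical
  by_cases hw0 : w = 0
  · rw [hw0, eq_comm, ← Finsupp.sum_id_eq_zero_iff hv, ← hsum, hw0, Finsupp.sum_zero_index]
  have hv0 : v ≠ 0 := by
    rwa [Ne, ← Finsupp.sum_id_eq_zero_iff hv, ← hsum, Finsupp.sum_id_eq_zero_iff hw]
  obtain ⟨C, hC⟩ := exists_isLeast_of_isChain hwc (Finsupp.support_nonempty_iff.mpr hw0)
  obtain ⟨D, hD⟩ := exists_isLeast_of_isChain hvc (Finsupp.support_nonempty_iff.mpr hv0)
  have hCD : C = D := SetLike.coe_injective <| Set.ext fun x => by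
    rw [← weightedInfDist_eq_zero_iff_of_isLeast hw hC,
      ← weightedInfDist_eq_zero_iff_of_isLeast hv hD, hdist]
  subst hCD
  set a := min (w C) (v C)
  have hsub : w - Finsupp.single C a = v - Finsupp.single C a := by
    have hlt : #(w - Finsupp.single C a).support + #(v - Finsupp.single C a).support
        < #w.support + #v.support := by
      obtain ha | ha : a = w C ∨ a = v C := min_choice _ _
      · rw [ha]
        exact add_lt_add_of_lt_of_le (Finsupp.card_support_sub_single_self_lt hC.1)
          (card_le_card (Finsupp.support_sub_single_subset hD.1 _))
      · rw [ha]
        exact add_lt_add_of_le_of_lt (card_le_card (Finsupp.support_sub_single_subset hC.1 _))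
          (Finsupp.card_support_sub_single_self_lt hD.1)
    refine eq_of_weightedInfDist_eq (Finsupp.sub_single_nonneg hw (min_le_left _ _))
      (Finsupp.sub_single_nonneg hv (min_le_right _ _))
      (hwc.mono (by exact_mod_cast Finsupp.support_sub_single_subset hC.1 a))
      (hvc.mono (by exact_mod_cast Finsupp.support_sub_single_subset hD.1 a)) ?_ ?_
    · rw [Finsupp.sum_sub_index fun _ _ _ => rfl, Finsupp.sum_sub_index fun _ _ _ => rfl, hsum]
    · rw [weightedInfDist_sub, weightedInfDist_sub, hdist]
  rw [← sub_add_cancel w (Finsupp.single C a), hsub, sub_add_cancel]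
termination_by #w.support + #v.support

theorem coe_linearCombination_eq_weightedInfDist
    {e : NonemptyCompacts X → BoundedContinuousFunction X ℝ}
    (he : ∀ (A : NonemptyCompacts X) (x : X), e A x = infDist x (A : Set X))
    (w : NonemptyCompacts X →₀ ℝ) :
    ⇑(Finsupp.linearCombination ℝ e w) = weightedInfDist w := by
  ext x
  simp [Finsupp.linearCombination_apply, Finsupp.sum, weightedInfDist, he]

end WeightedInfDist

/-- Let `A : [n] → K(X)` and `B : [m] → K(X)` be injective monotone chains of nonempty
compact subsets of a metric space `X`, and let `e(A)(x) = d(x,A)` in `C_b(X)`.  Then the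
convex hulls of `{e(A_1),…,e(A_n)}` and `{e(B_1),…,e(B_m)}` intersect exactly in the convex
hull of the `e`-image of the common subchain `A([n]) ∩ B([m])`. -/
theorem stmt6 {X : Type*} [MetricSpace X]
    (e : NonemptyCompacts X → BoundedContinuousFunction X ℝ)
    (he : ∀ (A : NonemptyCompacts X) (x : X), e A x = infDist x (A : Set X))
    {n m : ℕ} (A : Fin n → NonemptyCompacts X) (B : Fin m → NonemptyCompacts X)
    (hA : StrictMono A) (hB : StrictMono B) :
    convexHull ℝ (e '' Set.range A) ∩ convexHull ℝ (e '' Set.range B)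
      = convexHull ℝ (e '' (Set.range A ∩ Set.range B)) := by
  refine subset_antisymm (fun f ⟨hfA, hfB⟩ => ?_) (Set.subset_inter
    (convexHull_mono (Set.image_mono Set.inter_subset_left))
    (convexHull_mono (Set.image_mono Set.inter_subset_right)))
  obtain ⟨w, hw₀, hwA, hw₁, rfl⟩ := mem_convexHull_image_iff_exists_finsupp.mp hfA
  obtain ⟨v, hv₀, hvB, hv₁, hvw⟩ := mem_convexHull_image_iff_exists_finsupp.mp hfB
  have hwv : w = v := eq_of_weightedInfDist_eq hw₀ hv₀ (hA.monotone.isChain_range.mono hwA)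
    (hB.monotone.isChain_range.mono hvB) (hw₁.trans hv₁.symm) <| by
      rw [← coe_linearCombination_eq_weightedInfDist he,
        ← coe_linearCombination_eq_weightedInfDist he, hvw]
  exact mem_convexHull_image_iff_exists_finsupp.mpr
    ⟨w, hw₀, Set.subset_inter hwA (hwv ▸ hvB), hw₁, rfl⟩
end

section
/- Let X be a metric space, let A : [n] → K(X) and B : [m] → K(X) be injective monotone chains of nonempty compact subsets. If the convex hulls |A| and |B| in C_b(X) have a common point interior to both (i.e., representable with all coefficients strictly positive), then |A| = |B|. -/
open Metric TopologicalSpace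

private lemma fin_zero_lt_one {k : ℕ} : (0 : Fin (k + 2)) < 1 := by
  rw [Fin.lt_def]; simp

private lemma aux_subset {X : Type*} [MetricSpace X] {n m : ℕ}
    (A : Fin (n + 1) → NonemptyCompacts X) (B : Fin (m + 1) → NonemptyCompacts X)
    (hA : Monotone A)
    (lam : Fin (n + 1) → ℝ) (mu : Fin (m + 1) → ℝ)
    (hmu0 : 0 < mu 0) (hmu : ∀ j, 0 ≤ mu j)
    (heq : ∀ x, ∑ i, lam i * infDist x (A i : Set X) = ∑ j, mu j * infDist x (B j : Set X)) :
    (A 0 : Set X) ⊆ (B 0 : Set X) := by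
  intro x hx
  have h1 : ∑ i, lam i * infDist x (A i : Set X) = 0 := by
    apply Finset.sum_eq_zero
    intro i _
    have hxi : x ∈ (A i : Set X) := hA (Fin.zero_le i) hx
    rw [infDist_zero_of_mem hxi, mul_zero]
  have h2 : ∑ j, mu j * infDist x (B j : Set X) = 0 := (heq x).symm.trans h1
  have h3 : ∀ j ∈ Finset.univ, (0 : ℝ) ≤ mu j * infDist x (B j : Set X) := fun j _ =>
    mul_nonneg (hmu j) infDist_nonneg
  have h4 := (Finset.sum_eq_zero_iff_of_nonneg h3).mp h2 0 (Finset.mem_univ 0)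
  have h5 : infDist x (B 0 : Set X) = 0 := by
    rcases mul_eq_zero.mp h4 with h | h
    · exact absurd h hmu0.ne'
    · exact h
  exact ((B 0).isCompact.isClosed.mem_iff_infDist_zero (B 0).nonempty).mpr h5

private lemma aux_le {X : Type*} [MetricSpace X] {n m : ℕ}
    (A : Fin (n + 1) → NonemptyCompacts X) (B : Fin (m + 2) → NonemptyCompacts X)
    (hB : Monotone B) (hBs : B 0 < B 1)
    (lam : Fin (n + 1) → ℝ) (mu : Fin (m + 2) → ℝ)
    (hlam : ∀ i, 0 ≤ lam i)
    (h0 : (A 0 : Set X) ⊆ (B 0 : Set X))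
    (heq : ∀ x, ∑ i, lam i * infDist x (A i : Set X) = ∑ j, mu j * infDist x (B j : Set X)) :
    lam 0 ≤ mu 0 := by
  have hss : (B 0 : Set X) ⊂ (B 1 : Set X) := SetLike.coe_ssubset_coe.mpr hBs
  obtain ⟨x, hx1, hx0⟩ := Set.exists_of_ssubset hss
  have hd : 0 < infDist x (B 0 : Set X) :=
    ((B 0).isCompact.isClosed.notMem_iff_infDist_pos (B 0).nonempty).mp hx0
  have hrhs : ∑ j, mu j * infDist x (B j : Set X) = mu 0 * infDist x (B 0 : Set X) := by
    rw [Fin.sum_univ_succ]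
    have hz : ∀ j : Fin (m + 1), mu j.succ * infDist x (B j.succ : Set X) = 0 := by
      intro j
      have h1 : (1 : Fin (m + 2)) ≤ j.succ := by
        rw [Fin.le_def]; simp
      have hxj : x ∈ (B j.succ : Set X) := hB h1 hx1
      rw [infDist_zero_of_mem hxj, mul_zero]
    rw [Finset.sum_eq_zero (fun j _ => hz j), add_zero]
  have hlhs : lam 0 * infDist x (B 0 : Set X) ≤ ∑ i, lam i * infDist x (A i : Set X) := by
    rw [Fin.sum_univ_succ]
    have h1 : infDist x (B 0 : Set X) ≤ infDist x (A 0 : Set X) :=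
      infDist_le_infDist_of_subset h0 (A 0).nonempty
    have h2 : 0 ≤ ∑ i : Fin n, lam i.succ * infDist x (A i.succ : Set X) :=
      Finset.sum_nonneg fun i _ => mul_nonneg (hlam _) infDist_nonneg
    nlinarith [hlam 0]
  have hfin : lam 0 * infDist x (B 0 : Set X) ≤ mu 0 * infDist x (B 0 : Set X) :=
    hlhs.trans_eq ((heq x).trans hrhs)
  exact le_of_mul_le_mul_right hfin hd

private lemma key {X : Type*} [MetricSpace X] :
    ∀ (n : ℕ), ∀ (m : ℕ) (A : Fin n → NonemptyCompacts X) (B : Fin m → NonemptyCompacts X),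
    StrictMono A → StrictMono B →
    ∀ (lam : Fin n → ℝ) (mu : Fin m → ℝ),
    (∀ i, 0 < lam i) → (∀ j, 0 < mu j) →
    ∑ i, lam i = 1 → ∑ j, mu j = 1 →
    (∀ x, ∑ i, lam i * infDist x (A i : Set X) = ∑ j, mu j * infDist x (B j : Set X)) →
    Set.range A = Set.range B := by
  intro n
  induction n with
  | zero =>
    intro m A B _ _ lam mu _ _ hs1 _ _
    simp at hs1
  | succ n' ih =>
    intro m
    match m with
    | 0 =>
      intro A B hA hB lam mu hlam hmu hs1 hs2 heq
      simp at hs2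
    | m' + 1 =>
      intro A B hA hB lam mu hlam hmu hs1 hs2 heq
      have hsub1 : (A 0 : Set X) ⊆ (B 0 : Set X) :=
        aux_subset A B hA.monotone lam mu (hmu 0) (fun j => (hmu j).le) heq
      have hsub2 : (B 0 : Set X) ⊆ (A 0 : Set X) :=
        aux_subset B A hB.monotone mu lam (hlam 0) (fun i => (hlam i).le)
          (fun x => (heq x).symm)
      have h0 : A 0 = B 0 := SetLike.coe_injective (subset_antisymm hsub1 hsub2)
      rcases Nat.eq_zero_or_pos m' with hm' | hm'
      · subst hm'
        rcases Nat.eq_zero_or_pos n' with hn' | hn'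
        · subst hn'
          have hAB : A = B := funext fun i => by
            rw [Fin.fin_one_eq_zero i, h0]
          rw [hAB]
        · exfalso
          obtain ⟨n'', rfl⟩ : ∃ k, n' = k + 1 := ⟨n' - 1, by omega⟩
          have hmu0 : mu 0 = 1 := by
            have := hs2
            rw [Fin.sum_univ_one] at this
            exact this
          have hle : mu 0 ≤ lam 0 :=
            aux_le B A hA.monotone (hA fin_zero_lt_one) mu lam
              (fun j => (hmu j).le) hsub2 (fun x => (heq x).symm)
          have hlt : lam 0 < 1 := by
            rw [Fin.sum_univ_succ] at hs1
            have hpos : 0 < ∑ i : Fin (n'' + 1), lam i.succ :=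
              Finset.sum_pos (fun i _ => hlam _) Finset.univ_nonempty
            linarith
          linarith
      · obtain ⟨m'', rfl⟩ : ∃ k, m' = k + 1 := ⟨m' - 1, by omega⟩
        rcases Nat.eq_zero_or_pos n' with hn' | hn'
        · exfalso
          subst hn'
          have hlam0 : lam 0 = 1 := by
            have := hs1
            rw [Fin.sum_univ_one] at this
            exact this
          have hle : lam 0 ≤ mu 0 :=
            aux_le A B hB.monotone (hB fin_zero_lt_one) lam mu
              (fun i => (hlam i).le) hsub1 heq
          have hlt : mu 0 < 1 := by
            rw [Fin.sum_univ_succ] at hs2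
            have hpos : 0 < ∑ j : Fin (m'' + 1), mu j.succ :=
              Finset.sum_pos (fun j _ => hmu _) Finset.univ_nonempty
            linarith
          linarith
        · obtain ⟨n'', rfl⟩ : ∃ k, n' = k + 1 := ⟨n' - 1, by omega⟩
          have hle1 : lam 0 ≤ mu 0 :=
            aux_le A B hB.monotone (hB fin_zero_lt_one) lam mu
              (fun i => (hlam i).le) hsub1 heq
          have hle2 : mu 0 ≤ lam 0 :=
            aux_le B A hA.monotone (hA fin_zero_lt_one) mu lam
              (fun j => (hmu j).le) hsub2 (fun x => (heq x).symm)
          have h00 : lam 0 = mu 0 := le_antisymm hle1 hle2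
          set c : ℝ := 1 - lam 0 with hc_def
          have hcs1 : ∑ i : Fin (n'' + 1), lam i.succ = c := by
            rw [Fin.sum_univ_succ] at hs1; linarith
          have hcs2 : ∑ j : Fin (m'' + 1), mu j.succ = c := by
            rw [Fin.sum_univ_succ] at hs2; linarith [h00]
          have hc : 0 < c := by
            rw [← hcs1]
            exact Finset.sum_pos (fun i _ => hlam _) Finset.univ_nonempty
          have htail : ∀ x, ∑ i : Fin (n'' + 1), lam i.succ * infDist x (A i.succ : Set X)
              = ∑ j : Fin (m'' + 1), mu j.succ * infDist x (B j.succ : Set X) := by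
            intro x
            have e1 := Fin.sum_univ_succ (fun i => lam i * infDist x (A i : Set X))
            have e2 := Fin.sum_univ_succ (fun j => mu j * infDist x (B j : Set X))
            have h00' : lam 0 * infDist x (A 0 : Set X) = mu 0 * infDist x (B 0 : Set X) := by
              rw [h00, h0]
            have hx := heq x
            rw [e1, e2] at hx
            linarith
          have hrec := ih (m'' + 1) (A ∘ Fin.succ) (B ∘ Fin.succ)
            (hA.comp Fin.strictMono_succ) (hB.comp Fin.strictMono_succ)
            (fun i => lam i.succ / c) (fun j => mu j.succ / c)
            (fun i => div_pos (hlam _) hc) (fun j => div_pos (hmu _) hc)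
            (by rw [← Finset.sum_div, hcs1, div_self hc.ne'])
            (by rw [← Finset.sum_div, hcs2, div_self hc.ne'])
            (by
              intro x
              have h1 : ∑ i : Fin (n'' + 1), lam i.succ / c * infDist x ((A ∘ Fin.succ) i : Set X)
                  = (∑ i : Fin (n'' + 1), lam i.succ * infDist x (A i.succ : Set X)) / c := by
                rw [Finset.sum_div]
                exact Finset.sum_congr rfl fun i _ => div_mul_eq_mul_div _ _ _
              have h2 : ∑ j : Fin (m'' + 1), mu j.succ / c * infDist x ((B ∘ Fin.succ) j : Set X)
                  = (∑ j : Fin (m'' + 1), mu j.succ * infDist x (B j.succ : Set X)) / c := by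
                rw [Finset.sum_div]
                exact Finset.sum_congr rfl fun j _ => div_mul_eq_mul_div _ _ _
              rw [h1, h2, htail x])
          rw [Fin.range_fin_succ A, Fin.range_fin_succ B, h0]
          exact congrArg (insert (B 0)) hrec

/-- Let `A : [n] → K(X)` and `B : [m] → K(X)` be injective monotone chains of nonempty
compact subsets of a metric space `X`.  If the simplexes spanned by `{e(A_i)}` and
`{e(B_j)}` in `C_b(X)` (where `e(A)(x) = d(x,A)`) share a point interior to both, i.e.
a common point `Σ λ_i e(A_i) = Σ μ_j e(B_j)` with all coefficients strictly positive,
then the two simplexes coincide. -/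
theorem stmt7 {X : Type*} [MetricSpace X]
    (e : NonemptyCompacts X → BoundedContinuousFunction X ℝ)
    (he : ∀ (A : NonemptyCompacts X) (x : X), e A x = infDist x (A : Set X))
    {n m : ℕ} (A : Fin n → NonemptyCompacts X) (B : Fin m → NonemptyCompacts X)
    (hA : StrictMono A) (hB : StrictMono B)
    (lam : Fin n → ℝ) (mu : Fin m → ℝ)
    (hlam : ∀ i, 0 < lam i) (hmu : ∀ j, 0 < mu j)
    (hs1 : ∑ i, lam i = 1) (hs2 : ∑ j, mu j = 1)
    (heq : ∑ i, lam i • e (A i) = ∑ j, mu j • e (B j)) :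
    convexHull ℝ (e '' Set.range A) = convexHull ℝ (e '' Set.range B) := by
  have hpt : ∀ x, ∑ i, lam i * infDist x (A i : Set X)
      = ∑ j, mu j * infDist x (B j : Set X) := by
    intro x
    have h := DFunLike.congr_fun heq x
    simpa [BoundedContinuousFunction.coe_sum, Finset.sum_apply, he] using h
  have hr : Set.range A = Set.range B :=
    key n m A B hA hB lam mu hlam hmu hs1 hs2 hpt
  rw [hr]
end

section
/- Let X be a metric space of diameter ≤ 1 and let X_+ = X ⊔ {p} with d(p,x) = 1 for all x ∈ X. Then the restriction map r : C_b(X_+) → C_b(X) restricts to an isometry between K_Δ^+(X) (the union of convex hulls in C_b(X_+) of e-images of nonempty finite chains of nonempty compact subsets of X) and K_Δ(X) (the corresponding union in C_b(X)). -/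
open Metric

/-- Let `X` be a metric space of diameter `≤ 1` and `X_+ = X ⊔ {p}` with `d(p,x) = 1` for
all `x ∈ X` (formalized: `Y = X_+` is a metric space, `X = Y \ {p}`).  Then the restriction
map `r : C_b(X_+) → C_b(X)` is isometric on `K_Δ^+(X)`: for any two convex combinations
`F = Σ λ_i e(A_i)`, `G = Σ μ_j e(B_j)` of distance functions of chains of nonempty compact
subsets of `X`, the sup of `|F − G|` over `X_+` equals the sup over `X`. -/
theorem stmt9 {Y : Type*} [MetricSpace Y] (p : Y) (X : Set Y)
    (hX : X = {y : Y | y ≠ p}) (hp : ∀ x ∈ X, dist p x = 1)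
    (hdiam : ∀ x ∈ X, ∀ y ∈ X, dist x y ≤ 1)
    {n m : ℕ} (A : Fin n → Set Y) (B : Fin m → Set Y)
    (hAc : ∀ i, IsCompact (A i)) (hAne : ∀ i, (A i).Nonempty) (hAX : ∀ i, A i ⊆ X)
    (hAmono : Monotone A)
    (hBc : ∀ j, IsCompact (B j)) (hBne : ∀ j, (B j).Nonempty) (hBX : ∀ j, B j ⊆ X)
    (hBmono : Monotone B)
    (lam : Fin n → ℝ) (mu : Fin m → ℝ) (hlam : ∀ i, 0 ≤ lam i) (hmu : ∀ j, 0 ≤ mu j)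
    (hs1 : ∑ i, lam i = 1) (hs2 : ∑ j, mu j = 1) :
    ⨆ y : Y, |∑ i, lam i * infDist y (A i) - ∑ j, mu j * infDist y (B j)|
      = ⨆ x : X, |∑ i, lam i * infDist (x : Y) (A i) - ∑ j, mu j * infDist (x : Y) (B j)| := by
  set f : Y → ℝ := fun y => |∑ i, lam i * infDist y (A i) - ∑ j, mu j * infDist y (B j)| with hf
  -- infDist to a subset of X is at most 1
  have hd1 : ∀ (y : Y) (S : Set Y), S.Nonempty → S ⊆ X → infDist y S ≤ 1 := by
    intro y S hS hSX
    obtain ⟨a, ha⟩ := hS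
    refine (infDist_le_dist_of_mem ha).trans ?_
    by_cases hy : y ∈ X
    · exact hdiam y hy a (hSX ha)
    · have : y = p := by
        by_contra h
        exact hy (hX ▸ h)
      subst this
      exact le_of_eq (hp a (hSX ha))
  have hdp : ∀ (S : Set Y), S.Nonempty → S ⊆ X → infDist p S = 1 := by
    intro S hS hSX
    refine le_antisymm (hd1 p S hS hSX) (not_lt.mp fun h => ?_)
    obtain ⟨a, ha, hlt⟩ := (infDist_lt_iff hS).mp h
    rw [hp a (hSX ha)] at hlt
    exact lt_irrefl _ hlt
  -- sums are between 0 and 1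
  have hsum : ∀ (k : ℕ) (C : Fin k → Set Y) (c : Fin k → ℝ), (∀ i, (C i).Nonempty) →
      (∀ i, C i ⊆ X) → (∀ i, 0 ≤ c i) → (∑ i, c i = 1) → ∀ y : Y,
      0 ≤ ∑ i, c i * infDist y (C i) ∧ ∑ i, c i * infDist y (C i) ≤ 1 := by
    intro k C c hCne hCX hc hcs y
    constructor
    · exact Finset.sum_nonneg fun i _ => mul_nonneg (hc i) infDist_nonneg
    · calc ∑ i, c i * infDist y (C i) ≤ ∑ i, c i * 1 :=
            Finset.sum_le_sum fun i _ =>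
              mul_le_mul_of_nonneg_left (hd1 y (C i) (hCne i) (hCX i)) (hc i)
        _ = 1 := by simp [hcs]
  have hfle : ∀ y : Y, f y ≤ 1 := by
    intro y
    obtain ⟨h1a, h1b⟩ := hsum n A lam hAne hAX hlam hs1 y
    obtain ⟨h2a, h2b⟩ := hsum m B mu hBne hBX hmu hs2 y
    rw [hf, abs_sub_le_iff]
    constructor <;> linarith
  have hfp : f p = 0 := by
    have h1 : ∑ i, lam i * infDist p (A i) = 1 := by
      rw [show ∑ i, lam i * infDist p (A i) = ∑ i, lam i from
        Finset.sum_congr rfl fun i _ => by rw [hdp (A i) (hAne i) (hAX i), mul_one], hs1]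
    have h2 : ∑ j, mu j * infDist p (B j) = 1 := by
      rw [show ∑ j, mu j * infDist p (B j) = ∑ j, mu j from
        Finset.sum_congr rfl fun j _ => by rw [hdp (B j) (hBne j) (hBX j), mul_one], hs2]
    simp [hf, h1, h2]
  -- X nonempty
  have hn : 0 < n := by
    rcases Nat.eq_zero_or_pos n with h | h
    · subst h; simp at hs1
    · exact h
  obtain ⟨x₀, hx₀⟩ := hAne ⟨0, hn⟩
  have hx₀X : x₀ ∈ X := hAX _ hx₀
  haveI : Nonempty Y := ⟨p⟩
  have hbY : BddAbove (Set.range fun y : Y => f y) := ⟨1, by rintro _ ⟨y, rfl⟩; exact hfle y⟩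
  have hbX : BddAbove (Set.range fun x : X => f x) := ⟨1, by rintro _ ⟨x, rfl⟩; exact hfle x⟩
  have hXne : Nonempty X := ⟨⟨x₀, hx₀X⟩⟩
  apply le_antisymm
  · refine ciSup_le fun y => ?_
    by_cases hy : y ∈ X
    · exact le_ciSup hbX (⟨y, hy⟩ : X)
    · have hyp : y = p := by
        by_contra h
        exact hy (hX ▸ h)
      subst hyp
      rw [hfp]
      calc (0 : ℝ) ≤ f x₀ := abs_nonneg _
        _ ≤ _ := le_ciSup hbX (⟨x₀, hx₀X⟩ : X)
  · exact ciSup_le fun x => le_ciSup hbY (x : Y)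
end

section
/- Let X be a metric space and let ν = Σ_{i=1}^l λ_i δ_{a_i} − Σ_{j=1}^m μ_j δ_{b_j} be a finitely supported signed measure of total mass 0, with all λ_i > 0 and μ_j > 0. Then the Kantorovich norm ||ν|| = inf Σ_k |ν_k| d(x_k,y_k) over all representations ν = Σ_k ν_k (δ_{x_k} − δ_{y_k}) is attained by a representation of the form ν = Σ_{i,j} ν_{ij}(δ_{a_i} − δ_{b_j}) with all ν_{ij} ≥ 0, so that ||ν|| = min Σ_{i,j} ν_{ij} d(a_i,b_j) subject to Σ_j ν_{ij} = λ_i and Σ_i ν_{ij} = μ_j with ν_{ij} ≥ 0. -/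
/-!
Choosing the signs of the coefficients, a representation `ν = ∑ₖ wₖ (δ_{xₖ} - δ_{yₖ})` with
`wₖ ≥ 0` is a transport plan `π` on the finitely many points involved whose net outflow
`rowSum π - colSum π` is `ν` and whose cost is `∑ₖ wₖ d(xₖ, yₖ)`. If mass both enters and leaves a
point `z`, sending the amount `min (in, out)` directly from the predecessors of `z` to its
successors makes `z` a pure source or a pure sink, without increasing the cost by the triangle
inequality. After finitely many such shortcuts `π` carries `ν⁺` to `ν⁻`; adding the common mass
`min (λᵢ, μⱼ)` at points `aᵢ = bⱼ` at cost zero gives a plan from the `λᵢ δ_{aᵢ}` to the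
`μⱼ δ_{bⱼ}`. So every representation costs at least the minimum over the compact polytope of such
plans, and a minimizing plan `ν_{ij}` is itself the representation `∑ ν_{ij} (δ_{aᵢ} - δ_{bⱼ})`.
-/

open Classical Finset

namespace Kantorovich

noncomputable section

lemma exists_mul_mul_eq_min {A B : ℝ} (hA : 0 ≤ A) (hB : 0 ≤ B) :
    ∃ γ : ℝ, 0 ≤ γ ∧ γ * A * B = min A B ∧ γ * A ≤ 1 ∧ γ * B ≤ 1 := by
  wlog hAB : A ≤ B generalizing A B
  · obtain ⟨γ, hγ, h, hγB, hγA⟩ := this hB hA (le_of_not_ge hAB)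
    exact ⟨γ, hγ, by linarith [min_comm A B], hγA, hγB⟩
  rcases hB.eq_or_lt with rfl | hB
  · exact ⟨0, le_rfl, by simp [le_antisymm hAB hA], by simp, by simp⟩
  refine ⟨B⁻¹, by positivity, ?_, ?_, ?_⟩
  · field_simp; simp [hAB]
  · rw [inv_mul_le_iff₀ hB]; simpa using hAB
  · simp [hB.ne']

lemma add_min_eq_of_sub_eq {r c a b : ℝ} (hr : 0 ≤ r) (hc : 0 ≤ c) (h : r = 0 ∨ c = 0)
    (hd : r - c = a - b) : r + min a b = a ∧ c + min a b = b := by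
  rcases h with rfl | rfl
  · rw [min_eq_left (by linarith)]; constructor <;> linarith
  · rw [min_eq_right (by linarith)]; constructor <;> linarith

section TransportPlans

variable {κ κ' : Type*} [Fintype κ] [Fintype κ']

def transportPlans (lam : κ → ℝ) (mu : κ' → ℝ) : Set (κ → κ' → ℝ) :=
  {ν | (∀ i j, 0 ≤ ν i j) ∧ (∀ i, ∑ j, ν i j = lam i) ∧ (∀ j, ∑ i, ν i j = mu j)}

lemma isCompact_transportPlans (lam : κ → ℝ) (mu : κ' → ℝ) :
    IsCompact (transportPlans lam mu) := by
  have hclosed : IsClosed (transportPlans lam mu) := by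
    simp only [transportPlans, Set.ofPred_and, Set.ofPred_forall]
    refine .inter ?_ (.inter ?_ ?_) <;> refine isClosed_iInter fun _ => ?_
    · exact isClosed_iInter fun _ => isClosed_le (by fun_prop) (by fun_prop)
    all_goals exact isClosed_eq (by fun_prop) (by fun_prop)
  refine (isCompact_Icc (a := 0) (b := fun i _ => lam i)).of_isClosed_subset hclosed
    fun ν ⟨hν, hrow, _⟩ => ⟨fun i j => hν i j, fun i j => ?_⟩
  exact (single_le_sum (fun j _ => hν i j) (mem_univ j)).trans_eq (hrow i)

lemma transportPlans_nonempty {lam : κ → ℝ} {mu : κ' → ℝ} (hlam : 0 ≤ lam) (hmu : 0 ≤ mu)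
    (hmass : ∑ i, lam i = ∑ j, mu j) : (transportPlans lam mu).Nonempty := by
  have hT : 0 ≤ ∑ i, lam i := sum_nonneg fun i _ => hlam i
  refine ⟨fun i j => lam i * mu j / ∑ i, lam i,
    fun i j => div_nonneg (mul_nonneg (hlam i) (hmu j)) hT, fun i => ?_, fun j => ?_⟩
  · rw [← sum_div, ← mul_sum, ← hmass]
    rcases hT.eq_or_lt with h | h
    · simp [(sum_eq_zero_iff_of_nonneg fun i _ => hlam i).1 h.symm i]
    · field_simp
  · rw [← sum_div, ← sum_mul, hmass]
    rcases (hmass ▸ hT).eq_or_lt with h | h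
    · simp [(sum_eq_zero_iff_of_nonneg fun j _ => hmu j).1 h.symm j]
    · field_simp

end TransportPlans

section DiracSum

variable {ι κ : Type*} [Fintype κ]

def diracSum (f : κ → ι) (lam : κ → ℝ) (p : ι) : ℝ := ∑ i, if f i = p then lam i else 0

lemma diracSum_nonneg (f : κ → ι) {lam : κ → ℝ} (hlam : 0 ≤ lam) : 0 ≤ diracSum f lam :=
  fun p => sum_nonneg fun i _ => by split_ifs; exacts [hlam i, le_rfl]

lemma diracSum_apply_of_injective {f : κ → ι} (hf : Function.Injective f) (lam : κ → ℝ) (i : κ) :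
    diracSum f lam (f i) = lam i := by
  simp [diracSum, hf.eq_iff]

lemma diracSum_eq_zero_of_notMem_range {f : κ → ι} (lam : κ → ℝ) {p : ι} (hp : p ∉ Set.range f) :
    diracSum f lam p = 0 :=
  sum_eq_zero fun i _ => if_neg fun h => hp ⟨i, h⟩

end DiracSum

section Plans

variable {ι : Type*} [Fintype ι]

def rowSum (π : ι → ι → ℝ) (p : ι) : ℝ := ∑ q, π p q

def colSum (π : ι → ι → ℝ) (q : ι) : ℝ := ∑ p, π p q

def transitPoints (π : ι → ι → ℝ) : Finset ι := {z | 0 < rowSum π z ∧ 0 < colSum π z}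

lemma rowSum_nonneg {π : ι → ι → ℝ} (hπ : ∀ p q, 0 ≤ π p q) (p : ι) : 0 ≤ rowSum π p :=
  sum_nonneg fun q _ => hπ p q

lemma colSum_nonneg {π : ι → ι → ℝ} (hπ : ∀ p q, 0 ≤ π p q) (q : ι) : 0 ≤ colSum π q :=
  sum_nonneg fun p _ => hπ p q

lemma apply_eq_zero_of_rowSum_eq_zero {ρ : ι → ι → ℝ} (hρ : ∀ p q, 0 ≤ ρ p q) {p : ι}
    (h : rowSum ρ p = 0) (q : ι) : ρ p q = 0 :=
  (sum_eq_zero_iff_of_nonneg fun q _ => hρ p q).1 h q (mem_univ q)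

lemma apply_eq_zero_of_colSum_eq_zero {ρ : ι → ι → ℝ} (hρ : ∀ p q, 0 ≤ ρ p q) {q : ι}
    (h : colSum ρ q = 0) (p : ι) : ρ p q = 0 :=
  (sum_eq_zero_iff_of_nonneg fun p _ => hρ p q).1 h p (mem_univ p)

lemma transitPoints_ssubset {π π' : ι → ι → ℝ} {z : ι} (hz : z ∈ transitPoints π) {t : ℝ}
    (hrow : rowSum π' = rowSum π - Pi.single z t) (hcol : colSum π' = colSum π - Pi.single z t)
    (hz' : rowSum π' z = 0 ∨ colSum π' z = 0) : transitPoints π' ⊂ transitPoints π := by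
  refine Finset.ssubset_of_subset_of_ssubset (fun w hw => ?_) (erase_ssubset hz)
  simp only [transitPoints, mem_filter_univ] at hw ⊢
  have hwz : w ≠ z := by rintro rfl; rcases hz' with h | h <;> linarith [hw.1, hw.2]
  simpa [hrow, hcol, hwz, mem_erase, transitPoints] using hw

/-- The mass `γ π p z π z q` is sent directly from `p` to `q` instead of through `z`. -/
def shortcut (π : ι → ι → ℝ) (z : ι) (γ : ℝ) (p q : ι) : ℝ :=
  π p q - γ * colSum π z * (if p = z then π z q else 0)
    - γ * rowSum π z * (if q = z then π p z else 0) + γ * (π p z * π z q)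

lemma shortcut_nonneg {π : ι → ι → ℝ} (hπ : ∀ p q, 0 ≤ π p q) {z : ι} (hzz : π z z = 0) {γ : ℝ}
    (hγ : 0 ≤ γ) (hγA : γ * rowSum π z ≤ 1) (hγB : γ * colSum π z ≤ 1) (p q : ι) :
    0 ≤ shortcut π z γ p q := by
  by_cases hp : p = z <;> by_cases hq : q = z
  · subst hp hq; simp [shortcut, hzz]
  · subst hp; simp only [shortcut, if_neg hq, hzz, if_true]
    nlinarith [hπ p q]
  · subst hq; simp only [shortcut, if_neg hp, hzz, if_true]
    nlinarith [hπ p q]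
  · simp only [shortcut, if_neg hp, if_neg hq]
    nlinarith [hπ p q, mul_nonneg hγ (mul_nonneg (hπ p z) (hπ z q))]

lemma rowSum_shortcut {π : ι → ι → ℝ} {z : ι} (hzz : π z z = 0) (γ : ℝ) :
    rowSum (shortcut π z γ) = rowSum π - Pi.single z (γ * rowSum π z * colSum π z) := by
  ext p
  by_cases hp : p = z
  · subst hp
    simp [shortcut, rowSum, sum_sub_distrib, ← mul_sum, hzz]
    ring
  · simp [shortcut, rowSum, hp, sum_add_distrib, sum_sub_distrib, ← mul_sum]
    ring

lemma colSum_shortcut {π : ι → ι → ℝ} {z : ι} (hzz : π z z = 0) (γ : ℝ) :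
    colSum (shortcut π z γ) = colSum π - Pi.single z (γ * rowSum π z * colSum π z) := by
  ext q
  by_cases hq : q = z
  · subst hq
    simp [shortcut, colSum, sum_sub_distrib, ← mul_sum, hzz]
  · simp [shortcut, colSum, hq, sum_add_distrib, sum_sub_distrib, ← mul_sum, ← sum_mul]
    ring

section Restrict

variable {κ κ' : Type*} [Fintype κ] [Fintype κ'] {ρ : ι → ι → ℝ}

lemma sum_comp_right_eq_rowSum {g : κ' → ι} (hg : Function.Injective g) (hρ : ∀ p q, 0 ≤ ρ p q)
    (hcol : ∀ q ∉ Set.range g, colSum ρ q = 0) (p : ι) : ∑ j, ρ p (g j) = rowSum ρ p :=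
  Fintype.sum_of_injective g hg _ _
    (fun q hq => apply_eq_zero_of_colSum_eq_zero hρ (hcol q hq) p) fun _ => rfl

lemma sum_comp_left_eq_colSum {f : κ → ι} (hf : Function.Injective f) (hρ : ∀ p q, 0 ≤ ρ p q)
    (hrow : ∀ p ∉ Set.range f, rowSum ρ p = 0) (q : ι) : ∑ i, ρ (f i) q = colSum ρ q :=
  Fintype.sum_of_injective f hf _ _
    (fun p hp => apply_eq_zero_of_rowSum_eq_zero hρ (hrow p hp) q) fun _ => rfl

lemma comp_mem_transportPlans {f : κ → ι} {g : κ' → ι} (hf : Function.Injective f)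
    (hg : Function.Injective g) (hρ : ∀ p q, 0 ≤ ρ p q) {lam : κ → ℝ} {mu : κ' → ℝ}
    (hrow : rowSum ρ = diracSum f lam) (hcol : colSum ρ = diracSum g mu) :
    (fun i j => ρ (f i) (g j)) ∈ transportPlans lam mu := by
  refine ⟨fun i j => hρ _ _, fun i => ?_, fun j => ?_⟩
  · rw [sum_comp_right_eq_rowSum hg hρ
      (fun q hq => by rw [hcol, diracSum_eq_zero_of_notMem_range mu hq]), hrow,
      diracSum_apply_of_injective hf]
  · rw [sum_comp_left_eq_colSum hf hρ
      (fun p hp => by rw [hrow, diracSum_eq_zero_of_notMem_range lam hp]), hcol,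
      diracSum_apply_of_injective hg]

end Restrict

variable [PseudoMetricSpace ι]

def transportCost (π : ι → ι → ℝ) : ℝ := ∑ p, ∑ q, π p q * dist p q

lemma sum_sum_comp_eq_transportCost {κ κ' : Type*} [Fintype κ] [Fintype κ'] {ρ : ι → ι → ℝ}
    {f : κ → ι} {g : κ' → ι} (hf : Function.Injective f) (hg : Function.Injective g)
    (hρ : ∀ p q, 0 ≤ ρ p q) (hrow : ∀ p ∉ Set.range f, rowSum ρ p = 0)
    (hcol : ∀ q ∉ Set.range g, colSum ρ q = 0) :
    ∑ i, ∑ j, ρ (f i) (g j) * dist (f i) (g j) = transportCost ρ :=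
  Fintype.sum_of_injective f hf _ _
    (fun p hp => sum_eq_zero fun q _ => by
      rw [apply_eq_zero_of_rowSum_eq_zero hρ (hrow p hp), zero_mul])
    fun i => Fintype.sum_of_injective g hg _ _
      (fun q hq => by rw [apply_eq_zero_of_colSum_eq_zero hρ (hcol q hq), zero_mul]) fun _ => rfl

lemma exists_clear_diag {π : ι → ι → ℝ} (hπ : ∀ p q, 0 ≤ π p q) (z : ι) :
    ∃ π' : ι → ι → ℝ, (∀ p q, 0 ≤ π' p q) ∧ π' z z = 0 ∧
      rowSum π' = rowSum π - Pi.single z (π z z) ∧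
      colSum π' = colSum π - Pi.single z (π z z) ∧ transportCost π' ≤ transportCost π := by
  set π' : ι → ι → ℝ := fun p q => π p q - if p = z ∧ q = z then π z z else 0
  have hle : ∀ p q, π' p q ≤ π p q := fun p q => by
    simp only [π']; split_ifs <;> linarith [hπ z z]
  refine ⟨π', fun p q => ?_, by simp [π'], ?_, ?_, ?_⟩
  · simp only [π']; split_ifs with h <;> simp [h, hπ]
  · ext p
    by_cases hp : p = z <;> simp [π', rowSum, hp, sum_sub_distrib]
  · ext q
    by_cases hq : q = z <;> simp [π', colSum, hq, sum_sub_distrib]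
  · exact sum_le_sum fun p _ => sum_le_sum fun q _ =>
      mul_le_mul_of_nonneg_right (hle p q) dist_nonneg

lemma sum_sum_mul_mul_dist_le {π : ι → ι → ℝ} (hπ : ∀ p q, 0 ≤ π p q) (z : ι) :
    ∑ p, ∑ q, π p z * π z q * dist p q ≤
      colSum π z * ∑ q, π z q * dist z q + rowSum π z * ∑ p, π p z * dist p z :=
  calc ∑ p, ∑ q, π p z * π z q * dist p q
      ≤ ∑ p, ∑ q, π p z * π z q * (dist p z + dist z q) :=
        sum_le_sum fun p _ => sum_le_sum fun q _ => mul_le_mul_of_nonneg_left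
          (dist_triangle p z q) (mul_nonneg (hπ p z) (hπ z q))
    _ = colSum π z * ∑ q, π z q * dist z q + rowSum π z * ∑ p, π p z * dist p z := by
        simp only [rowSum, colSum, mul_add, sum_add_distrib, mul_sum, sum_mul]
        rw [add_comm, sum_comm]
        congr 1 <;> exact sum_congr rfl fun _ _ => sum_congr rfl fun _ _ => by ring

lemma transportCost_shortcut_le {π : ι → ι → ℝ} (hπ : ∀ p q, 0 ≤ π p q) (z : ι) {γ : ℝ}
    (hγ : 0 ≤ γ) : transportCost (shortcut π z γ) ≤ transportCost π := by
  have hcost : transportCost (shortcut π z γ) = transportCost π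
      - γ * (colSum π z * ∑ q, π z q * dist z q + rowSum π z * ∑ p, π p z * dist p z)
      + γ * ∑ p, ∑ q, π p z * π z q * dist p q := by
    simp [shortcut, transportCost, sub_mul, add_mul, sum_add_distrib, sum_sub_distrib, mul_sum,
      ite_mul, mul_assoc]
    simp only [mul_add, mul_sum]
    ring
  rw [hcost]
  nlinarith [mul_le_mul_of_nonneg_left (sum_sum_mul_mul_dist_le hπ z) hγ]

lemma exists_shortcut {π : ι → ι → ℝ} (hπ : ∀ p q, 0 ≤ π p q) {z : ι} (hzz : π z z = 0) :
    ∃ π' : ι → ι → ℝ, (∀ p q, 0 ≤ π' p q) ∧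
      rowSum π' = rowSum π - Pi.single z (min (rowSum π z) (colSum π z)) ∧
      colSum π' = colSum π - Pi.single z (min (rowSum π z) (colSum π z)) ∧
      transportCost π' ≤ transportCost π := by
  obtain ⟨γ, hγ, hγAB, hγA, hγB⟩ :=
    exists_mul_mul_eq_min (rowSum_nonneg hπ z) (colSum_nonneg hπ z)
  exact ⟨shortcut π z γ, shortcut_nonneg hπ hzz hγ hγA hγB, hγAB ▸ rowSum_shortcut hzz γ,
    hγAB ▸ colSum_shortcut hzz γ, transportCost_shortcut_le hπ z hγ⟩

lemma exists_rowSum_or_colSum_eq_zero_at {π : ι → ι → ℝ} (hπ : ∀ p q, 0 ≤ π p q) (z : ι) :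
    ∃ π' : ι → ι → ℝ, (∀ p q, 0 ≤ π' p q) ∧
      (∃ t, rowSum π' = rowSum π - Pi.single z t ∧ colSum π' = colSum π - Pi.single z t) ∧
      (rowSum π' z = 0 ∨ colSum π' z = 0) ∧ transportCost π' ≤ transportCost π := by
  obtain ⟨π₁, hπ₁, hzz, hrow₁, hcol₁, hcost₁⟩ := exists_clear_diag hπ z
  obtain ⟨π₂, hπ₂, hrow₂, hcol₂, hcost₂⟩ := exists_shortcut hπ₁ hzz
  refine ⟨π₂, hπ₂, ⟨π z z + min (rowSum π₁ z) (colSum π₁ z), ?_, ?_⟩, ?_, hcost₂.trans hcost₁⟩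
  · rw [hrow₂, hrow₁, Pi.single_add]; abel
  · rw [hcol₂, hcol₁, Pi.single_add]; abel
  · rw [hrow₂, hcol₂]
    rcases le_total (rowSum π₁ z) (colSum π₁ z) with h | h
    · simp [min_eq_left h]
    · simp [min_eq_right h]

theorem exists_rowSum_or_colSum_eq_zero {π : ι → ι → ℝ} (hπ : ∀ p q, 0 ≤ π p q) :
    ∃ π' : ι → ι → ℝ, (∀ p q, 0 ≤ π' p q) ∧ rowSum π' - colSum π' = rowSum π - colSum π ∧
      (∀ z, rowSum π' z = 0 ∨ colSum π' z = 0) ∧ transportCost π' ≤ transportCost π := by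
  by_cases h : (transitPoints π).Nonempty
  · obtain ⟨z, hz⟩ := h
    obtain ⟨π₁, hπ₁, ⟨t, hrow, hcol⟩, hz₁, hcost₁⟩ := exists_rowSum_or_colSum_eq_zero_at hπ z
    have : (transitPoints π₁).card < (transitPoints π).card :=
      card_lt_card (transitPoints_ssubset hz hrow hcol hz₁)
    obtain ⟨π₂, hπ₂, hnet, hzero, hcost₂⟩ := exists_rowSum_or_colSum_eq_zero hπ₁
    refine ⟨π₂, hπ₂, by rw [hnet, hrow, hcol]; abel, hzero, hcost₂.trans hcost₁⟩
  · refine ⟨π, hπ, rfl, fun z => ?_, le_rfl⟩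
    have hz : z ∉ transitPoints π := fun hz => h ⟨z, hz⟩
    simp only [transitPoints, mem_filter_univ, not_and_or, not_lt] at hz
    rcases hz with hz | hz
    exacts [.inl (hz.antisymm (rowSum_nonneg hπ z)), .inr (hz.antisymm (colSum_nonneg hπ z))]
termination_by (transitPoints π).card

theorem exists_marginals_eq {π : ι → ι → ℝ} (hπ : ∀ p q, 0 ≤ π p q) {α β : ι → ℝ}
    (hα : 0 ≤ α) (hβ : 0 ≤ β) (h : rowSum π - colSum π = α - β) :
    ∃ ρ : ι → ι → ℝ, (∀ p q, 0 ≤ ρ p q) ∧ rowSum ρ = α ∧ colSum ρ = β ∧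
      transportCost ρ ≤ transportCost π := by
  obtain ⟨π', hπ', hnet, hzero, hcost⟩ := exists_rowSum_or_colSum_eq_zero hπ
  have key (z : ι) := add_min_eq_of_sub_eq (rowSum_nonneg hπ' z) (colSum_nonneg hπ' z) (hzero z)
    (congrFun (hnet.trans h) z)
  refine ⟨fun p q => π' p q + if p = q then min (α p) (β p) else 0, fun p q => ?_,
    funext fun p => ?_, funext fun q => ?_, ?_⟩
  · have : 0 ≤ min (α p) (β p) := le_min (hα p) (hβ p)
    dsimp only
    split_ifs <;> linarith [hπ' p q]
  · simpa [rowSum, sum_add_distrib] using (key p).1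
  · simpa [colSum, sum_add_distrib] using (key q).2
  · simpa [transportCost, add_mul, sum_add_distrib, ite_mul] using hcost

end Plans

section EdgePlan

variable {ι κ : Type*} [Fintype κ] (w : κ → ℝ) (x y : κ → ι)

def edgePlan (p q : ι) : ℝ := ∑ k, if x k = p ∧ y k = q then w k else 0

variable {w} in
lemma edgePlan_nonneg (hw : ∀ k, 0 ≤ w k) (p q : ι) : 0 ≤ edgePlan w x y p q :=
  sum_nonneg fun k _ => by split_ifs; exacts [hw k, le_rfl]

variable [Fintype ι]

lemma rowSum_edgePlan : rowSum (edgePlan w x y) = diracSum x w := by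
  ext p
  simp only [rowSum, edgePlan, diracSum, ite_and]
  rw [sum_comm]
  simp

lemma colSum_edgePlan : colSum (edgePlan w x y) = diracSum y w := by
  ext q
  simp only [colSum, edgePlan, diracSum, ite_and]
  rw [sum_comm]
  simp

variable [PseudoMetricSpace ι]

lemma transportCost_edgePlan : transportCost (edgePlan w x y) = ∑ k, w k * dist (x k) (y k) := by
  simp only [transportCost, edgePlan, sum_mul, ite_and, ite_mul, zero_mul]
  simp_rw [sum_comm (s := (univ : Finset ι)) (t := (univ : Finset κ))]
  simp

end EdgePlan

section Representations

variable {X : Type*} [PseudoMetricSpace X]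

/-- The Kantorovich norm of `ν` is the infimum of this set. -/
def representationCosts (ν : X → ℝ) : Set ℝ :=
  {c | ∃ (r : ℕ) (w : Fin r → ℝ) (x y : Fin r → X),
    (∀ z, ν z = ∑ k, w k * ((if x k = z then (1 : ℝ) else 0) - (if y k = z then 1 else 0))) ∧
    c = ∑ k, |w k| * dist (x k) (y k)}

lemma sum_mem_representationCosts {κ : Type*} [Fintype κ] {ν : X → ℝ} (w : κ → ℝ) (x y : κ → X)
    (h : ∀ z, ν z = ∑ k, w k * ((if x k = z then (1 : ℝ) else 0) - (if y k = z then 1 else 0))) :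
    ∑ k, |w k| * dist (x k) (y k) ∈ representationCosts ν := by
  set e := (Fintype.equivFin κ).symm
  exact ⟨_, w ∘ e, x ∘ e, y ∘ e, fun z => (h z).trans (e.sum_comp _).symm, (e.sum_comp _).symm⟩

lemma exists_nonneg_of_mem_representationCosts {ν : X → ℝ} {c : ℝ}
    (hc : c ∈ representationCosts ν) :
    ∃ (r : ℕ) (w : Fin r → ℝ) (x y : Fin r → X), (∀ k, 0 ≤ w k) ∧
      (∀ z, ν z = ∑ k, w k * ((if x k = z then (1 : ℝ) else 0) - (if y k = z then 1 else 0))) ∧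
      c = ∑ k, w k * dist (x k) (y k) := by
  obtain ⟨r, w, x, y, hν, rfl⟩ := hc
  refine ⟨r, fun k => |w k|, fun k => if 0 ≤ w k then x k else y k,
    fun k => if 0 ≤ w k then y k else x k, fun k => abs_nonneg _, fun z => (hν z).trans ?_, ?_⟩
  all_goals refine sum_congr rfl fun k _ => ?_
  · by_cases hk : 0 ≤ w k
    · simp [hk, abs_of_nonneg hk]
    · simp [hk, abs_of_neg (not_le.1 hk)]; ring
  · by_cases hk : 0 ≤ w k <;> simp [hk, dist_comm]

variable {κ κ' : Type*} [Fintype κ] [Fintype κ']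

lemma sum_mem_representationCosts_of_mem_transportPlans (a : κ → X) (b : κ' → X)
    {lam : κ → ℝ} {mu : κ' → ℝ} {ν : κ → κ' → ℝ} (hν : ν ∈ transportPlans lam mu) :
    ∑ i, ∑ j, ν i j * dist (a i) (b j) ∈ representationCosts (diracSum a lam - diracSum b mu) := by
  obtain ⟨hν, hrow, hcol⟩ := hν
  convert sum_mem_representationCosts (fun p : κ × κ' => ν p.1 p.2) (fun p => a p.1)
    (fun p => b p.2) fun z => ?_ using 1
  · simp [Fintype.sum_prod_type, abs_of_nonneg (hν _ _)]
  · simp only [Pi.sub_apply, diracSum, Fintype.sum_prod_type, mul_sub, sum_sub_distrib, mul_ite,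
      mul_one, mul_zero]
    rw [sum_comm (f := fun i j => if b j = z then ν i j else 0)]
    simp [hrow, hcol]

theorem exists_mem_transportPlans_le {a : κ → X} {b : κ' → X} (ha : Function.Injective a)
    (hb : Function.Injective b) {lam : κ → ℝ} {mu : κ' → ℝ} (hlam : 0 ≤ lam) (hmu : 0 ≤ mu)
    {c : ℝ} (hc : c ∈ representationCosts (diracSum a lam - diracSum b mu)) :
    ∃ ν ∈ transportPlans lam mu, ∑ i, ∑ j, ν i j * dist (a i) (b j) ≤ c := by
  obtain ⟨r, w, x, y, hw, hrep, rfl⟩ := exists_nonneg_of_mem_representationCosts hc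
  set S : Finset X := univ.image a ∪ univ.image b ∪ univ.image x ∪ univ.image y
  let a' (i : κ) : S := ⟨a i, by simp [S]⟩
  let b' (j : κ') : S := ⟨b j, by simp [S]⟩
  let x' (k : Fin r) : S := ⟨x k, by simp [S]⟩
  let y' (k : Fin r) : S := ⟨y k, by simp [S]⟩
  have ha' : Function.Injective a' := fun i i' h => ha (congrArg Subtype.val h)
  have hb' : Function.Injective b' := fun j j' h => hb (congrArg Subtype.val h)
  obtain ⟨ρ, hρ, hrow, hcol, hcost⟩ := exists_marginals_eq (edgePlan_nonneg x' y' hw)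
    (diracSum_nonneg a' hlam) (diracSum_nonneg b' hmu) <| by
      ext p
      have hp := hrep p
      simp only [Pi.sub_apply, diracSum] at hp
      simp only [Pi.sub_apply, rowSum_edgePlan, colSum_edgePlan, diracSum, a', b', x', y',
        Subtype.ext_iff, hp, ← sum_sub_distrib]
      exact sum_congr rfl fun k _ => by split_ifs <;> ring
  refine ⟨_, comp_mem_transportPlans ha' hb' hρ hrow hcol, ?_⟩
  calc _ = transportCost ρ := sum_sum_comp_eq_transportCost ha' hb' hρ
          (fun p hp => by rw [hrow, diracSum_eq_zero_of_notMem_range lam hp])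
          (fun q hq => by rw [hcol, diracSum_eq_zero_of_notMem_range mu hq])
    _ ≤ _ := hcost
    _ = _ := transportCost_edgePlan w x' y'

end Representations

end

end Kantorovich

open Kantorovich

/-- Let `ν = Σ λ_i δ_{a_i} − Σ μ_j δ_{b_j}` be a finitely supported signed measure of total
mass `0` on a metric space `X`, with all `λ_i, μ_j > 0` (and distinct atoms `a_i`, resp.
`b_j`).  Then the Kantorovich norm `‖ν‖ = inf Σ_k |ν_k| d(x_k,y_k)` (inf over all
representations `ν = Σ_k ν_k (δ_{x_k} − δ_{y_k})`) is attained by a transport plan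
`ν_{ij} ≥ 0` with marginals `Σ_j ν_{ij} = λ_i`, `Σ_i ν_{ij} = μ_j`, so that
`‖ν‖ = min Σ_{i,j} ν_{ij} d(a_i,b_j)` over that polytope. -/
theorem stmt11 {X : Type*} [MetricSpace X] {l m : ℕ}
    (a : Fin l → X) (b : Fin m → X) (ha : Function.Injective a) (hb : Function.Injective b)
    (lam : Fin l → ℝ) (mu : Fin m → ℝ) (hlam : ∀ i, 0 < lam i) (hmu : ∀ j, 0 < mu j)
    (hmass : ∑ i, lam i = ∑ j, mu j) :
    ∃ ν : Fin l → Fin m → ℝ,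
      (∀ i j, 0 ≤ ν i j) ∧ (∀ i, ∑ j, ν i j = lam i) ∧ (∀ j, ∑ i, ν i j = mu j) ∧
      IsLeast {c : ℝ | ∃ (r : ℕ) (w : Fin r → ℝ) (x y : Fin r → X),
          (∀ z : X, ((∑ i, if a i = z then lam i else 0) - ∑ j, if b j = z then mu j else 0)
              = ∑ k, w k * ((if x k = z then (1 : ℝ) else 0) - (if y k = z then 1 else 0))) ∧
          c = ∑ k, |w k| * dist (x k) (y k)}
        (∑ i, ∑ j, ν i j * dist (a i) (b j)) := by
  have hlam' : 0 ≤ lam := fun i => (hlam i).le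
  have hmu' : 0 ≤ mu := fun j => (hmu j).le
  have hcost : Continuous fun ν : Fin l → Fin m → ℝ => ∑ i, ∑ j, ν i j * dist (a i) (b j) := by
    fun_prop
  obtain ⟨ν, hν, hmin⟩ := (isCompact_transportPlans lam mu).exists_isMinOn
    (transportPlans_nonempty hlam' hmu' hmass) hcost.continuousOn
  refine ⟨ν, hν.1, hν.2.1, hν.2.2, sum_mem_representationCosts_of_mem_transportPlans a b hν,
    fun c hc => ?_⟩
  obtain ⟨ρ, hρ, hcost⟩ := exists_mem_transportPlans_le ha hb hlam' hmu' hc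
  exact (hmin hρ).trans hcost
end

section
/- Let P = {0,1,…,n} with its usual order and metric (as a subspace of ℝ). The space of monotone step functions [0,1) → P with the L_1 metric (i.e., the Hartman–Mycielski realization |P|_HM of the order complex) is isometric to the standard skew n-simplex {(t_1,…,t_n) ∈ ℝ^n : 0 ≤ t_1 ≤ ⋯ ≤ t_n ≤ 1} with the l_1 metric. -/
/-!
For each `s`, the sets `{i | T i ≤ s}` and `{i | S i ≤ s}` are initial segments of `Fin n`,
hence nested, so the absolute difference of their cardinalities counts the indices `i` for
which `s` lies in `[min (T i) (S i), max (T i) (S i))`. Integrating this count over `[0, 1)`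
term by term gives `∑ i, |T i - S i|`.
-/

open Classical MeasureTheory

open Finset

theorem xor_le_iff_mem_Ico {α : Type*} [LinearOrder α] {a b x : α} :
    Xor (a ≤ x) (b ≤ x) ↔ x ∈ Set.Ico (min a b) (max a b) := by
  wlog hab : a ≤ b generalizing a b
  · rw [xor_comm, min_comm, max_comm]
    exact this (le_of_not_ge hab)
  rw [Set.mem_Ico, min_eq_left hab, max_eq_right hab, Xor, not_le, not_le]
  constructor
  · rintro (h | ⟨hb, ha⟩)
    · exact h
    · exact (lt_irrefl x (ha.trans_le (hab.trans hb))).elim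
  · exact Or.inl

theorem Finset.abs_card_filter_sub_card_filter {ι R : Type*} [Ring R] [LinearOrder R]
    [IsOrderedRing R] {s : Finset ι} {p q : ι → Prop} [DecidablePred p] [DecidablePred q]
    (h : s.filter p ⊆ s.filter q ∨ s.filter q ⊆ s.filter p) :
    |(#(s.filter p) : R) - #(s.filter q)| = #(s.filter fun i ↦ Xor (p i) (q i)) := by
  wlog hpq : s.filter p ⊆ s.filter q generalizing p q
  · rw [abs_sub_comm, this h.symm (h.resolve_left hpq)]
    simp only [xor_comm]
  have hsdiff : s.filter q \ s.filter p = s.filter fun i ↦ Xor (p i) (q i) := by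
    ext i
    have := @hpq i
    simp only [mem_sdiff, mem_filter] at this ⊢
    unfold Xor
    tauto
  rw [abs_sub_comm, abs_of_nonneg (sub_nonneg.2 (Nat.mono_cast (card_le_card hpq))),
    ← Nat.cast_sub (card_le_card hpq), ← card_sdiff_of_subset hpq, hsdiff]

theorem Monotone.filter_le_subset_total {ι α : Type*} [LinearOrder ι] [Preorder α]
    {T S : ι → α} (hT : Monotone T) (hS : Monotone S) (s : Finset ι) (a : α)
    [DecidablePred (T · ≤ a)] [DecidablePred (S · ≤ a)] :
    s.filter (T · ≤ a) ⊆ s.filter (S · ≤ a) ∨ s.filter (S · ≤ a) ⊆ s.filter (T · ≤ a) := by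
  by_contra! ⟨hTS, hST⟩
  obtain ⟨i, hi, hSi⟩ := not_subset.1 hTS
  obtain ⟨j, hj, hTj⟩ := not_subset.1 hST
  simp only [mem_filter] at hi hSi hj hTj
  rcases le_total i j with hij | hji
  · exact hSi ⟨hi.1, (hS hij).trans hj.2⟩
  · exact hTj ⟨hj.1, (hT hji).trans hi.2⟩

theorem Monotone.abs_card_le_sub_card_le {ι α R : Type*} [Fintype ι] [LinearOrder ι]
    [LinearOrder α] [Ring R] [LinearOrder R] [IsOrderedRing R] {T S : ι → α}
    (hT : Monotone T) (hS : Monotone S) (a : α) :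
    |(#(univ.filter (T · ≤ a)) : R) - #(univ.filter (S · ≤ a))|
      = #(univ.filter fun i ↦ a ∈ Set.Ico (min (T i) (S i)) (max (T i) (S i))) := by
  rw [abs_card_filter_sub_card_filter (hT.filter_le_subset_total hS univ a)]
  simp_rw [xor_le_iff_mem_Ico]

theorem integral_card_filter_mem {ι X : Type*} [Fintype ι] [MeasurableSpace X] {μ : Measure X}
    [IsFiniteMeasure μ] {I : ι → Set X} [∀ x, DecidablePred (x ∈ I ·)]
    (hI : ∀ i, MeasurableSet (I i)) :
    ∫ x, (#(univ.filter fun i ↦ x ∈ I i) : ℝ) ∂μ = ∑ i, μ.real (I i) := by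
  have hcard (x : X) : (#(univ.filter fun i ↦ x ∈ I i) : ℝ) = ∑ i, (I i).indicator 1 x := by
    simp only [card_filter, Nat.cast_sum, Nat.cast_ite, Nat.cast_one, Nat.cast_zero,
      Set.indicator_apply, Pi.one_apply]
  simp_rw [hcard]
  rw [integral_finsetSum _ fun i _ ↦ (integrable_const 1).indicator (hI i)]
  exact sum_congr rfl fun i _ ↦ integral_indicator_one (hI i)

/-- Let `P = {0,1,…,n} ⊂ ℝ`.  The Hartman–Mycielski realization `|P|_HM` of the order
complex (monotone step functions `[0,1) → P` with the `L_1` metric) is isometric to the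
standard skew simplex `{0 ≤ t_1 ≤ ⋯ ≤ t_n ≤ 1}` with the `l_1` metric: the correspondence
sends `(t_1,…,t_n)` to the step function `s ↦ #{i : t_i ≤ s}` (whose level sets are the
intervals `[t_i, t_{i+1})`), and it preserves distances. -/
theorem stmt13 (n : ℕ) (T S : Fin n → ℝ)
    (hTmono : Monotone T) (hT : ∀ i, T i ∈ Set.Icc (0 : ℝ) 1)
    (hSmono : Monotone S) (hS : ∀ i, S i ∈ Set.Icc (0 : ℝ) 1) :
    (∫ s in Set.Ico (0 : ℝ) 1,
        |((Finset.univ.filter (fun i : Fin n => T i ≤ s)).card : ℝ)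
          - ((Finset.univ.filter (fun i : Fin n => S i ≤ s)).card : ℝ)|)
      = ∑ i, |T i - S i| := by
  have hJ (i : Fin n) : Set.Ico (min (T i) (S i)) (max (T i) (S i)) ⊆ Set.Ico 0 1 :=
    Set.Ico_subset_Ico (le_min (hT i).1 (hS i).1) (max_le (hT i).2 (hS i).2)
  simp_rw [hTmono.abs_card_le_sub_card_le hSmono]
  rw [integral_card_filter_mem fun _ ↦ measurableSet_Ico]
  refine sum_congr rfl fun i _ ↦ ?_
  rw [measureReal_restrict_apply measurableSet_Ico, Set.inter_eq_left.2 (hJ i),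
    Real.volume_real_Ico_of_le min_le_max, max_sub_min_eq_abs']
end

section
/- Let P be a Hausdorff pospace, P' = ⨆_{n≥1} P^{[n]} the space of nonempty finite strict chains in P (P^{[n]} ⊆ P^n the subspace of strictly increasing n-tuples) ordered by the subchain relation, and P^Δ the set P' with the topology whose open sets are those open in P' and upward-closed for the subchain order. Then the map κ : |P| → P^Δ sending each point of the order complex to the chain spanning the minimal simplex containing it is continuous, where |P| carries the L_1 (Hartman–Mycielski) metric topology. -/
open Classical MeasureTheory

/-- The space `P'` of nonempty finite strict chains in `P`: the disjoint union over `n` of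
the subspaces `P^{[n+1]} ⊆ P^{n+1}` of strictly increasing tuples. -/
abbrev ChainsOf (P : Type*) [TopologicalSpace P] [PartialOrder P] : Type _ :=
  Σ n : ℕ, {c : Fin (n + 1) → P // StrictMono c}

/-- The topology of `P^Δ`: a set of chains is `Δ`-open iff it is open in the disjoint-union
(product) topology of `P'` and upward closed for the subchain relation. -/
def IsOpenDelta {P : Type*} [TopologicalSpace P] [PartialOrder P]
    (U : Set (ChainsOf P)) : Prop :=
  IsOpen U ∧ ∀ c ∈ U, ∀ d : ChainsOf P,
    Set.range (c.2 : Fin (c.1 + 1) → P) ⊆ Set.range (d.2 : Fin (d.1 + 1) → P) → d ∈ U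

/-- The index of the step of the step function `[0,1) → P` associated to weights `lam`:
`stepIdx lam t = k` iff `t` lies in `[Σ_{i<k} λ_i, Σ_{i≤k} λ_i)`. -/
noncomputable def stepIdx {n : ℕ} (lam : Fin (n + 1) → ℝ) (t : ℝ) : Fin (n + 1) :=
  if h : ∃ k : Fin (n + 1),
      (∑ i ∈ Finset.univ.filter (fun i => i < k), lam i) ≤ t ∧
        t < ∑ i ∈ Finset.univ.filter (fun i => i ≤ k), lam i
  then h.choose else 0

/-- The `L_1` (Hartman–Mycielski) distance between the points of the order complex `|P|`
given by the chains `c`, `d` with weights `lam`, `mu`: the integral over `[0,1)` of the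
distance between the associated step functions. -/
noncomputable def L1dist {P : Type*} [MetricSpace P] {n m : ℕ}
    (c : Fin (n + 1) → P) (lam : Fin (n + 1) → ℝ)
    (d : Fin (m + 1) → P) (mu : Fin (m + 1) → ℝ) : ℝ :=
  ∫ t in Set.Ico (0 : ℝ) 1, dist (c (stepIdx lam t)) (d (stepIdx mu t))

/-!
If the chain `d` with weights `μ` is `L₁`-close to the chain `c` with weights `λ`, then every
vertex `c i` is close to some vertex `d (j i)`: otherwise the `i`-th step, of length `λ i`,
alone would contribute at least `ε λ i` to the distance. Since the order of `P` is closed, a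
tuple close to `c` cannot reverse any of the strict inequalities `c i < c (i + 1)`; the points
`d (j i)` lie on the chain `d`, so they are comparable and `d ∘ j` is again a strict chain.
It is close to `c`, hence lies in `U` by openness, and it is a subchain of `d`, so `d ∈ U`
by upward closure.
-/

open Set Filter Topology

section StepFunction

variable {n : ℕ} {lam : Fin (n + 1) → ℝ} {t : ℝ} {k : Fin (n + 1)}

def stepInterval (lam : Fin (n + 1) → ℝ) (k : Fin (n + 1)) : Set ℝ :=
  Ico (∑ i ∈ Finset.univ.filter (· < k), lam i) (∑ i ∈ Finset.univ.filter (· ≤ k), lam i)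

lemma eq_of_mem_stepInterval (hlam : ∀ i, 0 ≤ lam i) {k' : Fin (n + 1)}
    (hk : t ∈ stepInterval lam k) (hk' : t ∈ stepInterval lam k') : k = k' := by
  have hle : ∀ a b : Fin (n + 1), a < b →
      ∑ i ∈ Finset.univ.filter (· ≤ a), lam i ≤ ∑ i ∈ Finset.univ.filter (· < b), lam i :=
    fun a b hab => Finset.sum_le_sum_of_subset_of_nonneg
      (Finset.monotone_filter_right _ fun _ _ hi => lt_of_le_of_lt hi hab) fun i _ _ => hlam i
  by_contra hne
  rcases lt_or_gt_of_ne hne with h | h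
  · exact (hk.2.trans_le ((hle _ _ h).trans hk'.1)).false
  · exact (hk'.2.trans_le ((hle _ _ h).trans hk.1)).false

lemma stepIdx_eq_iff (hlam : ∀ i, 0 ≤ lam i) :
    stepIdx lam t = k ↔ t ∈ stepInterval lam k ∨ (k = 0 ∧ ∀ j, t ∉ stepInterval lam j) := by
  by_cases hex : ∃ j, t ∈ stepInterval lam j
  · obtain ⟨j, hj⟩ := hex
    have hidx : stepIdx lam t = j := by
      rw [stepIdx, dif_pos ⟨j, hj⟩]
      exact eq_of_mem_stepInterval hlam (Exists.choose_spec (p := (t ∈ stepInterval lam ·)) _) hj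
    rw [hidx]
    exact ⟨fun h => .inl (h ▸ hj), fun h => h.elim (eq_of_mem_stepInterval hlam hj)
      fun h => (h.2 j hj).elim⟩
  · simp only [not_exists] at hex
    rw [stepIdx, dif_neg (by simpa [stepInterval] using hex)]
    simp [hex, eq_comm]

lemma stepIdx_eq_of_mem_stepInterval (hlam : ∀ i, 0 ≤ lam i) (ht : t ∈ stepInterval lam k) :
    stepIdx lam t = k :=
  (stepIdx_eq_iff hlam).2 (.inl ht)

lemma measurable_stepIdx (hlam : ∀ i, 0 ≤ lam i) : Measurable (stepIdx lam) := by
  refine measurable_to_countable' fun k => ?_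
  have hpre : stepIdx lam ⁻¹' {k} =
      stepInterval lam k ∪ {_t | k = 0} ∩ (⋃ j, stepInterval lam j)ᶜ := by
    ext t
    simp [stepIdx_eq_iff hlam]
  rw [hpre]
  exact measurableSet_Ico.union
    ((MeasurableSet.const _).inter (MeasurableSet.iUnion fun _ => measurableSet_Ico).compl)

lemma volume_real_stepInterval (hk : 0 ≤ lam k) : volume.real (stepInterval lam k) = lam k := by
  rw [stepInterval, Real.volume_real_Ico, Finset.filter_gt_eq_Iio, Finset.filter_ge_eq_Iic,
    ← Finset.Iio_insert, Finset.sum_insert Finset.notMem_Iio_self, add_sub_cancel_right,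
    max_eq_left hk]

lemma stepInterval_subset_Ico (hlam : ∀ i, 0 ≤ lam i) (hsum : ∑ i, lam i = 1) :
    stepInterval lam k ⊆ Ico 0 1 :=
  Ico_subset_Ico (Finset.sum_nonneg fun i _ => hlam i)
    (hsum ▸ Finset.sum_le_sum_of_subset_of_nonneg (Finset.filter_subset _ _)
      fun i _ _ => hlam i)

end StepFunction

section L1dist

variable {P : Type*} [MetricSpace P] {n m : ℕ} {c : Fin (n + 1) → P} {lam : Fin (n + 1) → ℝ}
  {d : Fin (m + 1) → P} {mu : Fin (m + 1) → ℝ}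

lemma integrableOn_dist_stepIdx (hlam : ∀ i, 0 ≤ lam i) (hmu : ∀ j, 0 ≤ mu j) :
    IntegrableOn (fun t => dist (c (stepIdx lam t)) (d (stepIdx mu t))) (Ico 0 1) :=
  Integrable.of_finite.comp_measurable (g := fun p : Fin (n + 1) × Fin (m + 1) =>
    dist (c p.1) (d p.2)) ((measurable_stepIdx hlam).prodMk (measurable_stepIdx hmu))

lemma exists_dist_lt_of_L1dist_lt (hlam : ∀ i, 0 ≤ lam i) (hsum : ∑ i, lam i = 1)
    (hmu : ∀ j, 0 ≤ mu j) {ε : ℝ} {i : Fin (n + 1)} (h : L1dist c lam d mu < ε * lam i) :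
    ∃ j, dist (d j) (c i) < ε := by
  by_contra! hfar
  have hint := integrableOn_dist_stepIdx (c := c) (d := d) hlam hmu
  have hsub := stepInterval_subset_Ico (k := i) hlam hsum
  have hstep : ε * lam i ≤
      ∫ t in stepInterval lam i, dist (c (stepIdx lam t)) (d (stepIdx mu t)) := by
    rw [← volume_real_stepInterval (hlam i)]
    refine setIntegral_ge_of_const_le_real measurableSet_Ico
      (by simp [stepInterval]) (fun t ht => ?_) (hint.mono_set hsub)
    rw [stepIdx_eq_of_mem_stepInterval hlam ht, dist_comm]
    exact hfar _
  exact h.not_ge (hstep.trans (setIntegral_mono_set hint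
    (ae_of_all _ fun _ => dist_nonneg) hsub.eventuallyLE))

end L1dist

section Chains

variable {P : Type*} [PartialOrder P] {n : ℕ}

lemma eventually_forall_not_succ_le [TopologicalSpace P]
    (hpos : IsClosed {p : P × P | p.1 ≤ p.2}) {c : Fin (n + 1) → P} (hc : StrictMono c) :
    ∀ᶠ c' in 𝓝 c, ∀ i : Fin n, ¬ c' i.succ ≤ c' i.castSucc :=
  eventually_all.2 fun i =>
    ((continuous_apply i.succ).prodMk (continuous_apply i.castSucc)).continuousAt.eventually_mem
      (x := c) (hpos.isOpen_compl.mem_nhds (hc i.castSucc_lt_succ).not_ge)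

lemma Monotone.strictMono_comp_of_not_le {β : Type*} [LinearOrder β] {d : β → P}
    (hd : Monotone d) {j : Fin (n + 1) → β}
    (h : ∀ i : Fin n, ¬ d (j i.succ) ≤ d (j i.castSucc)) :
    StrictMono (d ∘ j) :=
  Fin.strictMono_iff_lt_succ.2 fun i =>
    (hd (le_of_not_ge fun hji => h i (hd hji))).lt_of_not_ge (h i)

lemma eventually_mk_mem_of_isOpen [TopologicalSpace P] {U : Set (ChainsOf P)} (hU : IsOpen U)
    {c : Fin (n + 1) → P} {hc : StrictMono c} (hcU : (⟨n, ⟨c, hc⟩⟩ : ChainsOf P) ∈ U) :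
    ∀ᶠ c' in 𝓝 c, ∀ hc' : StrictMono c', (⟨n, ⟨c', hc'⟩⟩ : ChainsOf P) ∈ U := by
  have hfiber : IsOpen ((fun x : {c : Fin (n + 1) → P // StrictMono c} =>
      (⟨n, x⟩ : ChainsOf P)) ⁻¹' U) := hU.preimage continuous_sigmaMk
  obtain ⟨u, hu, hsub⟩ := (mem_nhds_subtype _ _ _).1 (hfiber.mem_nhds hcU)
  filter_upwards [hu] with c' hc'u hc' using hsub (a := ⟨c', hc'⟩) hc'u

end Chains

/-- Let `P` be a (metrizable, hence Hausdorff) pospace.  Then the map `κ : |P| → P^Δ`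
sending each point of the order complex to the chain spanning the minimal simplex
containing it is continuous, where `|P|` carries the `L_1` (Hartman–Mycielski) metric
topology and `P^Δ` the topology whose open sets are the `Δ`-open sets. -/
theorem stmt18 {P : Type*} [MetricSpace P] [PartialOrder P]
    (hpos : IsClosed {p : P × P | p.1 ≤ p.2})
    {n : ℕ} (c : Fin (n + 1) → P) (hc : StrictMono c)
    (lam : Fin (n + 1) → ℝ) (hlam : ∀ i, 0 < lam i) (hsum : ∑ i, lam i = 1)
    (U : Set (ChainsOf P)) (hU : IsOpenDelta U)
    (hcU : (⟨n, ⟨c, hc⟩⟩ : ChainsOf P) ∈ U) :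
    ∃ δ > (0 : ℝ), ∀ {m : ℕ} (d : Fin (m + 1) → P) (hd : StrictMono d)
      (mu : Fin (m + 1) → ℝ), (∀ j, 0 < mu j) → (∑ j, mu j = 1) →
        L1dist c lam d mu < δ → (⟨m, ⟨d, hd⟩⟩ : ChainsOf P) ∈ U := by
  obtain ⟨ε, hε, hnear⟩ := Metric.eventually_nhds_iff.1
    ((eventually_forall_not_succ_le hpos hc).and (eventually_mk_mem_of_isOpen hU.1 hcU))
  obtain ⟨i₀, hi₀⟩ := Finite.exists_min lam
  refine ⟨ε * lam i₀, mul_pos hε (hlam i₀), fun d hd mu hmu _ hdist => ?_⟩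
  have hclose : ∀ i, ∃ j, dist (d j) (c i) < ε := fun i =>
    exists_dist_lt_of_L1dist_lt (fun i => (hlam i).le) hsum (fun j => (hmu j).le)
      (hdist.trans_le (mul_le_mul_of_nonneg_left (hi₀ i) hε.le))
  choose j hj using hclose
  obtain ⟨hsep, hmem⟩ := hnear ((dist_pi_lt_iff hε).2 hj)
  exact hU.2 _ (hmem (hd.monotone.strictMono_comp_of_not_le hsep)) ⟨_, ⟨d, hd⟩⟩
    (range_comp_subset_range j d)
end
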